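/- Let δ ∈ (0,∞), s₁, s₂ ∈ (0,1), and s ∈ (0, (s₁+s₂)/2), and set ε̂ = s₁ + s₂ − 2s > 0. Then for all u ∈ H^{s₂}_Ω(ℝⁿ) and v ∈ H^{s₁}_Ω(ℝⁿ), the map s ↦ a(u,v;s) is infinitely differentiable, with kth derivative a_s^{(k)}(u,v;s) = (−2)^k ∫_{S_δ} (u(x)−u(x'))(v(x)−v(x')) log^k(|x−x'|) / |x−x'|^{n+2s} d(x',x) for k = 1,2,…, and |a_s^{(k)}(u,v;s)| ≤ C(k,ε̂) ‖u‖_{V^{s₂}} ‖v‖_{V^{s₁}}, where C(k,ε̂) = 2^k((k/(e·ε̂))^k + δ^{ε̂}(max(log δ, 0))^k). -/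

import Mathlib

/-!
Put `ε = s₁ + s₂ - 2s`. Differentiating the kernel `r^{-(n+2t)}` in `t` brings down a factor
`-2 log r`, so the `k`-th derivative has kernel `(-2 log r)^k r^{-(n+2s)}`. For `0 < r ≤ δ` one has
`r^ε |log r|^k ≤ C(k, ε) / 2^k` (for `r ≤ 1` this is `x^k e^{-εx} ≤ (k/(eε))^k` with `x = -log r`),
so this kernel is dominated by `C(k, ε) r^{-(n+s₁+s₂)}`, and by Cauchy–Schwarz the integral of
`|u(x)-u(x')| |v(x)-v(x')| r^{-(n+s₁+s₂)}` is at most `‖u‖_{V^{s₂}} ‖v‖_{V^{s₁}}`. The same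
domination, uniform for `t` near `s`, justifies differentiating under the integral sign.
-/

open MeasureTheory Real Set

noncomputable section

/-- `ℝⁿ`. -/
abbrev En (n : ℕ) : Type := EuclideanSpace ℝ (Fin n)

/-- The (truncated) fractional bilinear form
`a(u,v;s) = ∫_{S_δ}(u(x)−u(x'))(v(x)−v(x'))/|x−x'|^{n+2s} d(x',x)`. -/
def fracForm (n : ℕ) (δ s : ℝ) (u v : En n → ℝ) : ℝ :=
  ∫ p in {p : En n × En n | dist p.1 p.2 ≤ δ},
    (u p.1 - u p.2) * (v p.1 - v p.2) / dist p.1 p.2 ^ ((n : ℝ) + 2 * s)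

/-- The `k`-th `s`-derivative of the bilinear form:
`a_s^{(k)}(u,v;s) = (−2)^k ∫_{S_δ}(u(x)−u(x'))(v(x)−v(x'))log^k(|x−x'|)/|x−x'|^{n+2s}`.
For `k = 0` this is the bilinear form itself. -/
def fracFormD (n : ℕ) (δ : ℝ) (k : ℕ) (s : ℝ) (u v : En n → ℝ) : ℝ :=
  (-2 : ℝ) ^ k *
    ∫ p in {p : En n × En n | dist p.1 p.2 ≤ δ},
      (u p.1 - u p.2) * (v p.1 - v p.2) * Real.log (dist p.1 p.2) ^ k /
        dist p.1 p.2 ^ ((n : ℝ) + 2 * s)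

/-- The energy norm `‖u‖_{V^s} = a(u,u;s)^{1/2}`. -/
def vsNorm (n : ℕ) (δ s : ℝ) (u : En n → ℝ) : ℝ := Real.sqrt (fracForm n δ s u u)

/-- Membership in `H^σ_Ω(ℝⁿ)`: `u ∈ L²(ℝⁿ)`, `u = 0` a.e. on `ℝⁿ∖Ω`, finite Gagliardo
seminorm. -/
def memHs (n : ℕ) (Ω : Set (En n)) (σ : ℝ) (u : En n → ℝ) : Prop :=
  MemLp u 2 volume ∧ (∀ᵐ x : En n, x ∉ Ω → u x = 0) ∧
  Integrable (fun p : En n × En n =>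
    (u p.1 - u p.2) ^ 2 / dist p.1 p.2 ^ ((n : ℝ) + 2 * σ))

lemma pow_mul_exp_neg_mul_le (m : ℕ) {ε x : ℝ} (hε : 0 < ε) (hx : 0 ≤ x) :
    x ^ m * exp (-(ε * x)) ≤ ((m : ℝ) / (exp 1 * ε)) ^ m := by
  rcases m.eq_zero_or_pos with rfl | hm
  · simpa using neg_nonpos.mpr (mul_nonneg hε.le hx)
  have hm' : (0 : ℝ) < m := by exact_mod_cast hm
  -- `y ≤ exp (y - 1)` at `y = ε x / m`
  have hlin : x ≤ (m : ℝ) / (exp 1 * ε) * exp (ε * x / m) := by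
    have h := add_one_le_exp (ε * x / m - 1)
    rw [exp_sub, sub_add_cancel, le_div_iff₀ (exp_pos 1)] at h
    rw [div_mul_eq_mul_div, le_div_iff₀ (by positivity)]
    field_simp at h
    nlinarith
  calc x ^ m * exp (-(ε * x))
      ≤ ((m : ℝ) / (exp 1 * ε) * exp (ε * x / m)) ^ m * exp (-(ε * x)) := by
        gcongr
    _ = ((m : ℝ) / (exp 1 * ε)) ^ m := by
        rw [mul_pow, ← exp_nat_mul, mul_assoc, ← exp_add, mul_div_cancel₀ _ hm'.ne',
          add_neg_cancel, exp_zero, mul_one]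

/-- `C(m, ε) / 2^m` in the notation of the statement. -/
def logWeightBound (δ : ℝ) (m : ℕ) (ε : ℝ) : ℝ :=
  ((m : ℝ) / (exp 1 * ε)) ^ m + δ ^ ε * max (log δ) 0 ^ m

section LogWeightBound

variable {δ : ℝ}

lemma logWeightBound_nonneg (hδ : 0 < δ) (m : ℕ) {ε : ℝ} (hε : 0 < ε) :
    0 ≤ logWeightBound δ m ε := by
  unfold logWeightBound
  have : 0 ≤ max (log δ) 0 := le_max_right _ _
  positivity

lemma rpow_mul_abs_log_pow_le_logWeightBound (m : ℕ) {ε r : ℝ} (hε : 0 < ε) (hr : 0 < r)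
    (hrδ : r ≤ δ) : r ^ ε * |log r| ^ m ≤ logWeightBound δ m ε := by
  have hδ : 0 < δ := hr.trans_le hrδ
  have hmax : 0 ≤ max (log δ) 0 := le_max_right _ _
  unfold logWeightBound
  rcases le_or_gt r 1 with hr1 | hr1
  · have hlog : log r ≤ 0 := log_nonpos hr.le hr1
    have hre : r ^ ε = exp (-(ε * -log r)) := by rw [rpow_def_of_pos hr]; ring_nf
    rw [abs_of_nonpos hlog, hre, mul_comm]
    have := pow_mul_exp_neg_mul_le m hε (neg_nonneg.mpr hlog)
    have : 0 ≤ δ ^ ε * max (log δ) 0 ^ m := by positivity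
    linarith
  · have hlog : 0 ≤ log r := log_nonneg hr1.le
    have h : r ^ ε * |log r| ^ m ≤ δ ^ ε * max (log δ) 0 ^ m := by
      rw [abs_of_nonneg hlog]
      gcongr
      exact (log_le_log hr hrδ).trans (le_max_left _ _)
    have : 0 ≤ ((m : ℝ) / (exp 1 * ε)) ^ m := by positivity
    linarith

lemma logWeightBound_le_of_mem_Icc (hδ : 0 < δ) (m : ℕ) {ε a b : ℝ} (ha : 0 < a)
    (hε : ε ∈ Icc a b) :
    logWeightBound δ m ε ≤
      ((m : ℝ) / (exp 1 * a)) ^ m + (δ ^ a + δ ^ b) * max (log δ) 0 ^ m := by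
  have hrpow : δ ^ ε ≤ δ ^ a + δ ^ b := by
    rcases le_total δ 1 with h | h
    · linarith [rpow_le_rpow_of_exponent_ge hδ h hε.1, rpow_nonneg hδ.le b]
    · linarith [rpow_le_rpow_of_exponent_le h hε.2, rpow_nonneg hδ.le a]
  have hε0 : 0 < ε := ha.trans_le hε.1
  unfold logWeightBound
  have : 0 ≤ max (log δ) 0 := le_max_right _ _
  gcongr
  exact hε.1

lemma abs_mul_log_pow_div_rpow_le (hδ : 0 < δ) (a b : ℝ) (m : ℕ) {p ε r : ℝ} (hp : p ≠ 0)
    (hε : 0 < ε) (hr : 0 ≤ r) (hrδ : r ≤ δ) :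
    |a * b * log r ^ m / r ^ p| ≤ logWeightBound δ m ε * (|a| * |b| / r ^ (p + ε)) := by
  rcases hr.eq_or_lt with rfl | hr
  · rw [zero_rpow hp, div_zero, abs_zero]
    exact mul_nonneg (logWeightBound_nonneg hδ m hε) (by positivity)
  calc |a * b * log r ^ m / r ^ p|
      = r ^ ε * |log r| ^ m * (|a| * |b| / r ^ (p + ε)) := by
        rw [rpow_add hr, abs_div, abs_mul, abs_mul, abs_pow, abs_of_pos (rpow_pos_of_pos hr p)]
        field_simp
    _ ≤ logWeightBound δ m ε * (|a| * |b| / r ^ (p + ε)) := by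
        gcongr
        exact rpow_mul_abs_log_pow_le_logWeightBound m hε hr hrδ

end LogWeightBound

lemma hasDerivAt_log_pow_div_rpow (c : ℝ) (k : ℕ) {r : ℝ} (hr : 0 < r) (N t : ℝ) :
    HasDerivAt (fun t : ℝ => c * log r ^ k / r ^ (N + 2 * t))
      (-2 * (c * log r ^ (k + 1) / r ^ (N + 2 * t))) t := by
  have hexp : HasDerivAt (fun t : ℝ => N + 2 * t) 2 t := by
    simpa using ((hasDerivAt_id t).const_mul 2).const_add N
  have hpow := (hasStrictDerivAt_const_rpow hr (N + 2 * t)).hasDerivAt.comp t hexp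
  refine ((hasDerivAt_const t (c * log r ^ k)).div hpow (rpow_pos_of_pos hr _).ne').congr_deriv ?_
  simp only [Function.comp_apply]
  field_simp
  ring

lemma abs_mul_abs_div_rpow_eq_sqrt_mul_sqrt (a b : ℝ) {N s₁ s₂ r : ℝ} (hr : 0 ≤ r)
    (hN : N + s₁ + s₂ ≠ 0) :
    |a| * |b| / r ^ (N + s₁ + s₂) =
      √(a * a / r ^ (N + 2 * s₂)) * √(b * b / r ^ (N + 2 * s₁)) := by
  rw [sqrt_div' _ (rpow_nonneg hr _), sqrt_div' _ (rpow_nonneg hr _), sqrt_mul_self_eq_abs,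
    sqrt_mul_self_eq_abs, sqrt_eq_rpow, sqrt_eq_rpow, ← rpow_mul hr, ← rpow_mul hr,
    div_mul_div_comm, ← rpow_add' hr (by convert hN using 1; ring)]
  congr 2
  ring

section SqrtProduct

variable {α : Type*} [MeasurableSpace α] {μ : Measure α}

lemma memLp_two_sqrt {F : α → ℝ} (hF : 0 ≤ F) (hi : Integrable F μ) :
    MemLp (fun x => √(F x)) 2 μ := by
  refine (memLp_two_iff_integrable_sq hi.aemeasurable.sqrt.aestronglyMeasurable).mpr ?_
  simpa only [sq_sqrt (hF _)] using hi

lemma integral_sqrt_mul_sqrt_le {F₁ F₂ : α → ℝ} (h₁ : 0 ≤ F₁) (h₂ : 0 ≤ F₂)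
    (hi₁ : Integrable F₁ μ) (hi₂ : Integrable F₂ μ) :
    ∫ x, √(F₁ x) * √(F₂ x) ∂μ ≤ √(∫ x, F₁ x ∂μ) * √(∫ x, F₂ x ∂μ) := by
  have h := integral_mul_le_Lp_mul_Lq_of_nonneg Real.HolderConjugate.two_two
    (ae_of_all μ fun x => sqrt_nonneg (F₁ x)) (ae_of_all μ fun x => sqrt_nonneg (F₂ x))
    (by simpa using memLp_two_sqrt h₁ hi₁) (by simpa using memLp_two_sqrt h₂ hi₂)
  simpa only [rpow_two, sq_sqrt (h₁ _), sq_sqrt (h₂ _), ← sqrt_eq_rpow] using h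

end SqrtProduct

def logIntegrand {α : Type*} (N : ℝ) (f g d : α → ℝ) (k : ℕ) (t : ℝ) (x : α) : ℝ :=
  f x * g x * log (d x) ^ k / d x ^ (N + 2 * t)

def logMoment {α : Type*} [MeasurableSpace α] (μ : Measure α) (N : ℝ) (f g d : α → ℝ) (k : ℕ)
    (t : ℝ) : ℝ :=
  ∫ x, logIntegrand N f g d k t x ∂μ

section LogMoment

variable {α : Type*} {N δ s₁ s₂ : ℝ} {f g d : α → ℝ}

lemma abs_logIntegrand_le (hδ : 0 < δ) (k : ℕ) {t : ℝ} (hN : N + 2 * t ≠ 0)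
    (ht : 2 * t < s₁ + s₂) {x : α} (hd : 0 ≤ d x) (hdδ : d x ≤ δ) :
    |logIntegrand N f g d k t x| ≤
      logWeightBound δ k (s₁ + s₂ - 2 * t) * (|f x| * |g x| / d x ^ (N + s₁ + s₂)) := by
  have h := abs_mul_log_pow_div_rpow_le hδ (f x) (g x) k hN (sub_pos.mpr ht) hd hdδ
  rwa [show N + 2 * t + (s₁ + s₂ - 2 * t) = N + s₁ + s₂ by ring] at h

lemma hasDerivAt_logIntegrand (k : ℕ) {t : ℝ} {x : α} (hd : 0 ≤ d x)
    (hN : ∀ᶠ t' in nhds t, N + 2 * t' ≠ 0) :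
    HasDerivAt (fun t => logIntegrand N f g d k t x) (-2 * logIntegrand N f g d (k + 1) t x) t := by
  rcases hd.eq_or_lt with hx | hx
  · -- on the diagonal `d x = 0` the integrand vanishes for all `t'` with `N + 2 t' ≠ 0`
    have hzero : ∀ j t', N + 2 * t' ≠ 0 → logIntegrand N f g d j t' x = 0 := fun j t' ht' => by
      rw [logIntegrand, ← hx, zero_rpow ht', div_zero]
    rw [hzero (k + 1) t hN.self_of_nhds, mul_zero]
    exact (hasDerivAt_const t 0).congr_of_eventuallyEq (hN.mono fun t' => hzero k t')
  · exact hasDerivAt_log_pow_div_rpow (f x * g x) k hx N t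

variable [MeasurableSpace α] {μ : Measure α}

lemma aestronglyMeasurable_logIntegrand (hf : AEMeasurable f μ) (hg : AEMeasurable g μ)
    (hd : AEMeasurable d μ) (k : ℕ) (t : ℝ) :
    AEStronglyMeasurable (logIntegrand N f g d k t) μ := by
  unfold logIntegrand
  exact (((hf.mul hg).mul ((measurable_log.comp_aemeasurable hd).pow_const k)).div
    (hd.pow_const _)).aestronglyMeasurable

lemma integrable_abs_mul_abs_div_rpow (hd : ∀ x, 0 ≤ d x) (hN : N + s₁ + s₂ ≠ 0)
    (hf : Integrable (fun x => f x * f x / d x ^ (N + 2 * s₂)) μ)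
    (hg : Integrable (fun x => g x * g x / d x ^ (N + 2 * s₁)) μ) :
    Integrable (fun x => |f x| * |g x| / d x ^ (N + s₁ + s₂)) μ := by
  have hF : ∀ {h : α → ℝ} {σ : ℝ}, 0 ≤ fun x => h x * h x / d x ^ (N + 2 * σ) := fun x =>
    div_nonneg (mul_self_nonneg _) (rpow_nonneg (hd x) _)
  simp_rw [abs_mul_abs_div_rpow_eq_sqrt_mul_sqrt _ _ (hd _) hN]
  exact (memLp_two_sqrt hF hf).integrable_mul (memLp_two_sqrt hF hg)

lemma integral_abs_mul_abs_div_rpow_le (hd : ∀ x, 0 ≤ d x) (hN : N + s₁ + s₂ ≠ 0)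
    (hf : Integrable (fun x => f x * f x / d x ^ (N + 2 * s₂)) μ)
    (hg : Integrable (fun x => g x * g x / d x ^ (N + 2 * s₁)) μ) :
    ∫ x, |f x| * |g x| / d x ^ (N + s₁ + s₂) ∂μ ≤
      √(∫ x, f x * f x / d x ^ (N + 2 * s₂) ∂μ) * √(∫ x, g x * g x / d x ^ (N + 2 * s₁) ∂μ) := by
  have hF : ∀ {h : α → ℝ} {σ : ℝ}, 0 ≤ fun x => h x * h x / d x ^ (N + 2 * σ) := fun x =>
    div_nonneg (mul_self_nonneg _) (rpow_nonneg (hd x) _)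
  simp_rw [abs_mul_abs_div_rpow_eq_sqrt_mul_sqrt _ _ (hd _) hN]
  exact integral_sqrt_mul_sqrt_le hF hF hf hg

lemma integrable_logIntegrand (hδ : 0 < δ) (hd : ∀ x, 0 ≤ d x) (hdδ : ∀ᵐ x ∂μ, d x ≤ δ)
    (hG : Integrable (fun x => |f x| * |g x| / d x ^ (N + s₁ + s₂)) μ) (hf : AEMeasurable f μ)
    (hg : AEMeasurable g μ) (hdm : AEMeasurable d μ) (k : ℕ) {t : ℝ} (hN : N + 2 * t ≠ 0)
    (ht : 2 * t < s₁ + s₂) :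
    Integrable (logIntegrand N f g d k t) μ := by
  refine (hG.const_mul (logWeightBound δ k (s₁ + s₂ - 2 * t))).mono'
    (aestronglyMeasurable_logIntegrand hf hg hdm k t) ?_
  filter_upwards [hdδ] with x hx
  exact abs_logIntegrand_le hδ k hN ht (hd x) hx

lemma abs_logMoment_le (hδ : 0 < δ) (hd : ∀ x, 0 ≤ d x) (hdδ : ∀ᵐ x ∂μ, d x ≤ δ)
    (hG : Integrable (fun x => |f x| * |g x| / d x ^ (N + s₁ + s₂)) μ) (k : ℕ) {t : ℝ}
    (hN : N + 2 * t ≠ 0) (ht : 2 * t < s₁ + s₂) :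
    |logMoment μ N f g d k t| ≤
      logWeightBound δ k (s₁ + s₂ - 2 * t) * ∫ x, |f x| * |g x| / d x ^ (N + s₁ + s₂) ∂μ := by
  rw [← integral_const_mul]
  refine (abs_integral_le_integral_abs).trans (integral_mono_of_nonneg
    (ae_of_all μ fun x => abs_nonneg _) (hG.const_mul _) ?_)
  filter_upwards [hdδ] with x hx
  exact abs_logIntegrand_le hδ k hN ht (hd x) hx

lemma hasDerivAt_logMoment (hδ : 0 < δ) (hd : ∀ x, 0 ≤ d x) (hdδ : ∀ᵐ x ∂μ, d x ≤ δ)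
    (hG : Integrable (fun x => |f x| * |g x| / d x ^ (N + s₁ + s₂)) μ) (hf : AEMeasurable f μ)
    (hg : AEMeasurable g μ) (hdm : AEMeasurable d μ) (k : ℕ) {s : ℝ} (hN : 0 < N + 2 * s)
    (hs : 2 * s < s₁ + s₂) :
    HasDerivAt (logMoment μ N f g d k) (-2 * logMoment μ N f g d (k + 1) s) s := by
  set ε := s₁ + s₂ - 2 * s
  set ρ := min ((N + 2 * s) / 4) (ε / 4)
  have hε : 0 < ε := sub_pos.mpr hs
  have hρ : 0 < ρ := lt_min (by linarith) (by linarith)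
  have hball : ∀ t ∈ Metric.ball s ρ,
      0 < N + 2 * t ∧ s₁ + s₂ - 2 * t ∈ Icc (ε / 2) (3 * ε / 2) := by
    intro t ht
    rw [Metric.mem_ball, Real.dist_eq, abs_lt] at ht
    have := min_le_left ((N + 2 * s) / 4) (ε / 4)
    have := min_le_right ((N + 2 * s) / 4) (ε / 4)
    exact ⟨by linarith, by constructor <;> linarith⟩
  set C := ((((k + 1 : ℕ) : ℝ) / (exp 1 * (ε / 2))) ^ (k + 1) +
    (δ ^ (ε / 2) + δ ^ (3 * ε / 2)) * max (log δ) 0 ^ (k + 1))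
  have hderiv_le : ∀ᵐ x ∂μ, ∀ t ∈ Metric.ball s ρ, ‖-2 * logIntegrand N f g d (k + 1) t x‖ ≤
      2 * C * (|f x| * |g x| / d x ^ (N + s₁ + s₂)) := by
    filter_upwards [hdδ] with x hx t ht
    obtain ⟨hNt, hεt⟩ := hball t ht
    rw [norm_mul, norm_neg, Real.norm_two, Real.norm_eq_abs, mul_assoc]
    gcongr
    refine (abs_logIntegrand_le (s₁ := s₁) (s₂ := s₂) hδ (k + 1) hNt.ne' ?_ (hd x) hx).trans ?_
    · linarith [hεt.1]
    gcongr
    · exact div_nonneg (by positivity) (rpow_nonneg (hd x) _)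
    · exact logWeightBound_le_of_mem_Icc hδ (k + 1) (by linarith) hεt
  have hderiv : ∀ x, ∀ t ∈ Metric.ball s ρ, HasDerivAt (fun t => logIntegrand N f g d k t x)
      (-2 * logIntegrand N f g d (k + 1) t x) t := fun x t ht =>
    hasDerivAt_logIntegrand k (hd x) <|
      (Metric.isOpen_ball.eventually_mem ht).mono fun t' ht' => (hball t' ht').1.ne'
  have h := hasDerivAt_integral_of_dominated_loc_of_deriv_le (Metric.ball_mem_nhds s hρ)
    (Filter.Eventually.of_forall (aestronglyMeasurable_logIntegrand hf hg hdm k))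
    (integrable_logIntegrand hδ hd hdδ hG hf hg hdm k hN.ne' hs)
    ((aestronglyMeasurable_logIntegrand hf hg hdm (k + 1) s).const_mul (-2)) hderiv_le
    (hG.const_mul (2 * C)) (ae_of_all μ hderiv)
  unfold logMoment
  rw [← integral_const_mul]
  exact h.2

end LogMoment

theorem statement10_general
    (n : ℕ)
    (Ω : Set (En n))
    (δ : ℝ) (hδ : 0 < δ)
    (s₁ s₂ : ℝ)
    (u v : En n → ℝ) (hu : memHs n Ω s₂ u) (hv : memHs n Ω s₁ v) :
    ∀ s ∈ Set.Ioo (0 : ℝ) ((s₁ + s₂) / 2),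
      -- infinite differentiability: for every `k`, the `k`-th derivative `fracFormD k`
      -- is differentiable with derivative `fracFormD (k+1)`
      (∀ k : ℕ, HasDerivAt (fun t : ℝ => fracFormD n δ k t u v)
        (fracFormD n δ (k + 1) s u v) s) ∧
      (fracFormD n δ 0 s u v = fracForm n δ s u v) ∧
      -- the bound on the derivatives, for `k ≥ 1`
      (∀ k : ℕ, 1 ≤ k →
        |fracFormD n δ k s u v| ≤
          2 ^ k * (((k : ℝ) / (Real.exp 1 * (s₁ + s₂ - 2 * s))) ^ k +
              δ ^ (s₁ + s₂ - 2 * s) * (max (Real.log δ) 0) ^ k) *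
            vsNorm n δ s₂ u * vsNorm n δ s₁ v) := by
  rintro s ⟨hs0, hs⟩
  set S := {p : En n × En n | dist p.1 p.2 ≤ δ}
  set Du := fun p : En n × En n => u p.1 - u p.2
  set Dv := fun p : En n × En n => v p.1 - v p.2
  set d := fun p : En n × En n => dist p.1 p.2
  have hD : ∀ k t,
      fracFormD n δ k t u v = (-2) ^ k * logMoment (volume.restrict S) n Du Dv d k t :=
    fun _ _ => rfl
  have hmeas : ∀ w : En n → ℝ, AEMeasurable w →
      AEMeasurable (fun p : En n × En n => w p.1 - w p.2) (volume.restrict S) := fun w hw => by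
    rw [Measure.volume_eq_prod]
    exact (hw.comp_fst.sub hw.comp_snd).restrict
  have hd : ∀ p, 0 ≤ d p := fun _ => dist_nonneg
  have hdδ : ∀ᵐ p ∂(volume.restrict S), d p ≤ δ :=
    ae_restrict_mem (isClosed_le continuous_dist continuous_const).measurableSet
  have hNs : 0 < (n : ℝ) + 2 * s := by positivity
  have hN : (n : ℝ) + s₁ + s₂ ≠ 0 := by linarith
  have hu' : Integrable (fun p => Du p * Du p / d p ^ ((n : ℝ) + 2 * s₂)) (volume.restrict S) := by
    simpa only [sq] using hu.2.2.restrict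
  have hv' : Integrable (fun p => Dv p * Dv p / d p ^ ((n : ℝ) + 2 * s₁)) (volume.restrict S) := by
    simpa only [sq] using hv.2.2.restrict
  have hG := integrable_abs_mul_abs_div_rpow hd hN hu' hv'
  refine ⟨fun k => ?_, by simp [fracFormD, fracForm], fun k _ => ?_⟩
  · simp only [hD, pow_succ, mul_assoc]
    exact (hasDerivAt_logMoment hδ hd hdδ hG (hmeas u hu.1.1.aemeasurable)
      (hmeas v hv.1.1.aemeasurable) measurable_dist.aemeasurable k hNs
      (by linarith)).const_mul _
  · rw [hD, abs_mul, abs_pow, abs_neg, abs_two, mul_assoc _ (vsNorm n δ s₂ u), mul_assoc]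
    gcongr
    exact (abs_logMoment_le hδ hd hdδ hG k hNs.ne' (by linarith)).trans
      (mul_le_mul_of_nonneg_left (integral_abs_mul_abs_div_rpow_le hd hN hu' hv')
        (logWeightBound_nonneg hδ k (by linarith)))

/-- the bilinear form is infinitely differentiable with respect to `s` on
`(0,(s₁+s₂)/2)`, the `k`-th derivative being `fracFormD k`, with the bound
`|a_s^{(k)}(u,v;s)| ≤ C(k,ε̂)‖u‖_{V^{s₂}}‖v‖_{V^{s₁}}` where `ε̂ = s₁+s₂−2s` and
`C(k,ε̂) = 2^k((k/(e ε̂))^k + δ^{ε̂}(log δ)₊^k)`. -/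
theorem statement10
    (n : ℕ) (hn : 1 ≤ n)
    (Ω : Set (En n)) (hΩb : Bornology.IsBounded Ω) (hΩmeas : MeasurableSet Ω)
    (hΩne : Ω.Nonempty)
    (δ : ℝ) (hδ : 0 < δ)
    (s₁ s₂ : ℝ) (hs₁ : s₁ ∈ Set.Ioo (0 : ℝ) 1) (hs₂ : s₂ ∈ Set.Ioo (0 : ℝ) 1)
    (u v : En n → ℝ) (hu : memHs n Ω s₂ u) (hv : memHs n Ω s₁ v) :
    ∀ s ∈ Set.Ioo (0 : ℝ) ((s₁ + s₂) / 2),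
      -- infinite differentiability: for every `k`, the `k`-th derivative `fracFormD k`
      -- is differentiable with derivative `fracFormD (k+1)`
      (∀ k : ℕ, HasDerivAt (fun t : ℝ => fracFormD n δ k t u v)
        (fracFormD n δ (k + 1) s u v) s) ∧
      (fracFormD n δ 0 s u v = fracForm n δ s u v) ∧
      -- the bound on the derivatives, for `k ≥ 1`
      (∀ k : ℕ, 1 ≤ k →
        |fracFormD n δ k s u v| ≤
          2 ^ k * (((k : ℝ) / (Real.exp 1 * (s₁ + s₂ - 2 * s))) ^ k +
              δ ^ (s₁ + s₂ - 2 * s) * (max (Real.log δ) 0) ^ k) *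
            vsNorm n δ s₂ u * vsNorm n δ s₁ v) :=
  statement10_general n Ω δ hδ s₁ s₂ u v hu hv

end
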